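/- For any permutation σ of ℕ and any n, ‖F_{2^n}^σ‖₄⁴ = #A_n^σ, where F_N^σ(s,t) = Σ_{k=0}^{N-1} e^{2πiks} w_{σ(k)}(t), the w_m are the Walsh functions, ‖·‖₄ is the L⁴ norm on [0,1]², and A_n^σ = { (k,l,m) ∈ [0,2^n)³ : k+l-m ∈ [0,2^n) and σ(k) ⊕ σ(l) ⊕ σ(m) = σ(k+l-m) }. -/

import Mathlib

/-- The i-th Rademacher function on [0,1]. -/
noncomputable def rad (i : ℕ) (t : ℝ) : ℝ := (-1 : ℝ) ^ ⌊(2 : ℝ) ^ (i + 1) * t⌋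

/-- The m-th Walsh function: product of Rademacher functions over the binary digits of m. -/
noncomputable def walsh (m : ℕ) (t : ℝ) : ℝ :=
  ∏ i ∈ Finset.range m, if Nat.testBit m i then rad i t else 1

/-- F_N^σ(s,t) = Σ_{k<N} e^{2πiks} w_{σ(k)}(t). -/
noncomputable def F (N : ℕ) (σ : ℕ → ℕ) (s t : ℝ) : ℂ :=
  ∑ k ∈ Finset.range N, Complex.exp (2 * Real.pi * Complex.I * k * s) * (walsh (σ k) t : ℂ)

/-- A n σ: triples (k,l,m) ∈ [0,2^n)³ with k+l-m ∈ [0,2^n) and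
σ(k) ⊕ σ(l) ⊕ σ(m) = σ(k+l-m). -/
def A (n : ℕ) (σ : ℕ → ℕ) : Finset (ℕ × ℕ × ℕ) :=
  (Finset.range (2 ^ n) ×ˢ Finset.range (2 ^ n) ×ˢ Finset.range (2 ^ n)).filter
    (fun p => p.2.2 ≤ p.1 + p.2.1 ∧ p.1 + p.2.1 - p.2.2 < 2 ^ n ∧
      σ p.1 ^^^ σ p.2.1 ^^^ σ p.2.2 = σ (p.1 + p.2.1 - p.2.2))

open Finset MeasureTheory intervalIntegral Complex

lemma rad_cases (i : ℕ) (t : ℝ) : rad i t = 1 ∨ rad i t = -1 := by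
  rcases Int.even_or_odd ⌊(2 : ℝ) ^ (i + 1) * t⌋ with h | h
  · exact Or.inl (h.neg_one_zpow)
  · exact Or.inr (h.neg_one_zpow)

lemma rad_sq (i : ℕ) (t : ℝ) : rad i t * rad i t = 1 := by
  rcases rad_cases i t with h | h <;> rw [h] <;> norm_num

lemma rad_measurable (i : ℕ) : Measurable (rad i) := by
  exact measurable_from_top.comp (Int.measurable_floor.comp (measurable_const.mul measurable_id))

lemma testBit_false_of_ge {m i : ℕ} (h : m ≤ i) : m.testBit i = false :=
  Nat.testBit_lt_two_pow (lt_of_le_of_lt h (Nat.lt_two_pow_self (n := i)))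

lemma walsh_eq_prod {m N : ℕ} (h : m < 2 ^ N) (t : ℝ) :
    walsh m t = ∏ i ∈ Finset.range N, if Nat.testBit m i then rad i t else 1 := by
  have key : ∀ M : ℕ, m ≤ M → N ≤ M →
      (∏ i ∈ Finset.range M, if Nat.testBit m i then rad i t else 1)
        = ∏ i ∈ Finset.range N, if Nat.testBit m i then rad i t else 1 := by
    intro M hm hN
    refine (Finset.prod_subset (Finset.range_subset_range.2 hN) ?_).symm
    intro i _ hi
    simp only [Finset.mem_range, not_lt] at hi
    have : m.testBit i = false := Nat.testBit_lt_two_pow (h.trans_le (by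
      exact Nat.pow_le_pow_right (by norm_num) hi))
    simp [this]
  have key2 : (∏ i ∈ Finset.range m, if Nat.testBit m i then rad i t else 1)
      = ∏ i ∈ Finset.range (max m N), if Nat.testBit m i then rad i t else 1 := by
    refine Finset.prod_subset (Finset.range_subset_range.2 (le_max_left m N)) ?_
    intro i _ hi
    simp only [Finset.mem_range, not_lt] at hi
    simp [testBit_false_of_ge hi]
  rw [walsh, key2, key (max m N) (le_max_left _ _) (le_max_right _ _)]

lemma walsh_mul (a b : ℕ) (t : ℝ) : walsh a t * walsh b t = walsh (a ^^^ b) t := by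
  set N := max a b + 1 with hN
  have ha : a < 2 ^ N := lt_of_le_of_lt (le_max_left a b) (by
    calc max a b < 2 ^ (max a b) := Nat.lt_two_pow_self
    _ ≤ 2 ^ N := Nat.pow_le_pow_right (by norm_num) (by omega))
  have hb : b < 2 ^ N := lt_of_le_of_lt (le_max_right a b) (by
    calc max a b < 2 ^ (max a b) := Nat.lt_two_pow_self
    _ ≤ 2 ^ N := Nat.pow_le_pow_right (by norm_num) (by omega))
  have hx : a ^^^ b < 2 ^ N := Nat.xor_lt_two_pow ha hb
  rw [walsh_eq_prod ha, walsh_eq_prod hb, walsh_eq_prod hx, ← Finset.prod_mul_distrib]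
  refine Finset.prod_congr rfl fun i _ => ?_
  rw [Nat.testBit_xor]
  cases h1 : a.testBit i <;> cases h2 : b.testBit i <;> simp [rad_sq]

lemma walsh_measurable (m : ℕ) : Measurable (walsh m) := by
  unfold walsh
  exact Finset.measurable_prod _ (fun i _ => by
    split
    · exact rad_measurable i
    · exact measurable_const)

lemma walsh_cases (m : ℕ) (t : ℝ) : walsh m t = 1 ∨ walsh m t = -1 := by
  unfold walsh
  induction (Finset.range m) using Finset.induction with
  | empty => simp
  | @insert a s h ih =>
    rw [Finset.prod_insert h]
    have h2 : (if Nat.testBit m a then rad a t else 1) = 1 ∨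
        (if Nat.testBit m a then rad a t else 1) = -1 := by
      split
      · exact rad_cases a t
      · exact Or.inl rfl
    rcases ih with h1 | h1 <;> rcases h2 with h2 | h2 <;> rw [h1, h2] <;> norm_num

lemma walsh_intervalIntegrable (m : ℕ) (a b : ℝ) :
    IntervalIntegrable (walsh m) volume a b := by
  rw [intervalIntegrable_iff]
  refine Integrable.mono' (g := fun _ => (1:ℝ))
    (integrableOn_const measure_Ioc_lt_top.ne)
    ((walsh_measurable m).aestronglyMeasurable.restrict) ?_
  filter_upwards with t
  rcases walsh_cases m t with h | h <;> simp [h]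


lemma floor_piece {N i j : ℕ} (hi : i < N) {t : ℝ}
    (ht : (j : ℝ) / 2 ^ N ≤ t) (ht2 : t < ((j : ℝ) + 1) / 2 ^ N) :
    ⌊(2 : ℝ) ^ (i + 1) * t⌋ = (j / 2 ^ (N - 1 - i) : ℕ) := by
  set d := N - 1 - i with hdd
  have hd : i + 1 + d = N := by omega
  set q := j / 2 ^ d with hq
  have h2N : (2 : ℝ) ^ N = 2 ^ (i + 1) * 2 ^ d := by rw [← pow_add, hd]
  have hp1 : (0:ℝ) < 2 ^ (i+1) := by positivity
  have hp2 : (0:ℝ) < 2 ^ d := by positivity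
  have hq1 : (q : ℝ) * 2 ^ d ≤ j := by
    exact_mod_cast Nat.div_mul_le_self j (2 ^ d)
  have hq2 : (j : ℝ) + 1 ≤ ((q : ℝ) + 1) * 2 ^ d := by
    have : j + 1 ≤ (q + 1) * 2 ^ d := by
      have h3 : j < (q + 1) * 2 ^ d :=
        (Nat.div_lt_iff_lt_mul (by positivity)).1 (Nat.lt_succ_self q)
      omega
    exact_mod_cast this
  rw [div_le_iff₀ (by positivity : (0:ℝ) < 2 ^ N)] at ht
  rw [lt_div_iff₀ (by positivity : (0:ℝ) < 2 ^ N)] at ht2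
  have hkey : t * 2 ^ N = (2 ^ (i+1) * t) * 2 ^ d := by rw [h2N]; ring
  rw [Int.floor_eq_iff]
  constructor
  · push_cast
    have h1 : (q : ℝ) * 2 ^ d ≤ (2 ^ (i+1) * t) * 2 ^ d := by
      have := hq1.trans ht
      linarith [hkey ▸ this]
    exact le_of_mul_le_mul_right h1 hp2
  · push_cast
    have h1 : (2 ^ (i+1) * t) * 2 ^ d < ((q : ℝ) + 1) * 2 ^ d := by
      rw [← hkey]; linarith
    calc (2:ℝ) ^ (i+1) * t
        = (2 ^ (i+1) * t) * 2 ^ d / 2 ^ d := by field_simp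
      _ < ((q : ℝ) + 1) * 2 ^ d / 2 ^ d := by
          gcongr
      _ = (q : ℝ) + 1 := by field_simp

lemma rad_piece {N i j : ℕ} (hi : i < N) {t : ℝ}
    (ht : (j : ℝ) / 2 ^ N ≤ t) (ht2 : t < ((j : ℝ) + 1) / 2 ^ N) :
    rad i t = if j.testBit (N - 1 - i) then (-1 : ℝ) else 1 := by
  rw [rad, floor_piece hi ht ht2, Nat.testBit_eq_decide_div_mod_eq]
  rcases Nat.even_or_odd (j / 2 ^ (N - 1 - i)) with h | h
  · have h2 : j / 2 ^ (N - 1 - i) % 2 = 0 := Nat.even_iff.1 h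
    have : Even ((j / 2 ^ (N - 1 - i) : ℕ) : ℤ) := by exact_mod_cast h.natCast
    rw [this.neg_one_zpow]
    simp [h2]
  · have h2 : j / 2 ^ (N - 1 - i) % 2 = 1 := Nat.odd_iff.1 h
    have : Odd ((j / 2 ^ (N - 1 - i) : ℕ) : ℤ) := by exact_mod_cast h.natCast
    rw [this.neg_one_zpow]
    simp [h2]

lemma walsh_piece {N m j : ℕ} (hm : m < 2 ^ N) {t : ℝ}
    (ht : (j : ℝ) / 2 ^ N ≤ t) (ht2 : t < ((j : ℝ) + 1) / 2 ^ N) :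
    walsh m t = ∏ i ∈ Finset.range N,
      if m.testBit i && j.testBit (N - 1 - i) then (-1 : ℝ) else 1 := by
  rw [walsh_eq_prod hm]
  refine Finset.prod_congr rfl fun i hi => ?_
  rw [rad_piece (Finset.mem_range.1 hi) ht ht2]
  cases h1 : m.testBit i <;> cases h2 : j.testBit (N - 1 - i) <;> simp [h1, h2]

lemma key_sum : ∀ (N : ℕ) (ε : ℕ → Bool),
    (∑ j ∈ Finset.range (2 ^ N), ∏ i ∈ Finset.range N,
      if ε i && j.testBit (N - 1 - i) then (-1 : ℝ) else 1)
      = ∏ i ∈ Finset.range N, if ε i then (0 : ℝ) else 2 := by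
  intro N
  induction N with
  | zero => simp
  | succ N ih =>
    intro ε
    have h2 : 2 ^ (N + 1) = 2 ^ N + 2 ^ N := by ring
    rw [h2, Finset.sum_range_add]
    have e1 : ∀ j < 2 ^ N, (∏ i ∈ Finset.range (N + 1),
        if ε i && j.testBit (N + 1 - 1 - i) then (-1 : ℝ) else 1)
        = ∏ i ∈ Finset.range N, if ε (i + 1) && j.testBit (N - 1 - i) then (-1 : ℝ) else 1 := by
      intro j hj
      rw [Finset.prod_range_succ' (fun i => if ε i && j.testBit (N + 1 - 1 - i) then (-1 : ℝ) else 1) N]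
      have hb : j.testBit (N + 1 - 1 - 0) = false := Nat.testBit_lt_two_pow (by simpa using hj)
      rw [hb]
      simp only [Bool.and_false, if_false, mul_one]
      simp only [show ∀ i : ℕ, N + 1 - 1 - (i + 1) = N - 1 - i from fun i => by omega]
      simp
    have e2 : ∀ j < 2 ^ N, (∏ i ∈ Finset.range (N + 1),
        if ε i && (2 ^ N + j).testBit (N + 1 - 1 - i) then (-1 : ℝ) else 1)
        = (∏ i ∈ Finset.range N, if ε (i + 1) && j.testBit (N - 1 - i) then (-1 : ℝ) else 1)
          * (if ε 0 then (-1 : ℝ) else 1) := by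
      intro j hj
      rw [Finset.prod_range_succ' (fun i => if ε i && (2 ^ N + j).testBit (N + 1 - 1 - i) then (-1 : ℝ) else 1) N]
      have hb : (2 ^ N + j).testBit (N + 1 - 1 - 0) = true := by
        simp only [Nat.add_sub_cancel, Nat.sub_zero]
        rw [Nat.testBit_two_pow_add_eq, Nat.testBit_lt_two_pow hj]
        rfl
      rw [hb]
      congr 1
      · refine Finset.prod_congr rfl fun i hi => ?_
        have hlt : N - 1 - i < N := by
          simp only [Finset.mem_range] at hi
          omega
        have : N + 1 - 1 - (i + 1) = N - 1 - i := by omega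
        rw [this, Nat.testBit_two_pow_add_gt hlt]
      · simp [Bool.and_true]
    rw [Finset.sum_congr rfl (fun j hj => e1 j (Finset.mem_range.1 hj)),
        Finset.sum_congr rfl (fun j hj => e2 (j) (Finset.mem_range.1 hj)),
        ← Finset.sum_mul, ih (fun i => ε (i + 1)),
        Finset.prod_range_succ' (fun i => if ε i then (0 : ℝ) else 2) N]
    cases h : ε 0 <;> simp [h] <;> ring

lemma walsh_integral (m : ℕ) : (∫ t in (0:ℝ)..1, walsh m t) = if m = 0 then 1 else 0 := by
  have hm : m < 2 ^ m := Nat.lt_two_pow_self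
  set N := m with hNdef
  -- the partition points
  set a : ℕ → ℝ := fun j => (j : ℝ) / 2 ^ N with ha
  have hpiece : ∀ j : ℕ, (∫ t in a j..a (j + 1), walsh m t)
      = (∏ i ∈ Finset.range N, if m.testBit i && j.testBit (N - 1 - i) then (-1 : ℝ) else 1)
        * (1 / 2 ^ N) := by
    intro j
    have hle : a j ≤ a (j + 1) := by
      simp only [ha]
      gcongr <;> push_cast <;> linarith
    have hconst : Set.EqOn (walsh m)
        (fun _ => ∏ i ∈ Finset.range N, if m.testBit i && j.testBit (N - 1 - i) then (-1:ℝ) else 1)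
        (Set.Ioo (a j) (a (j + 1))) := by
      intro t htm
      have h1 : (j : ℝ) / 2 ^ N ≤ t := le_of_lt htm.1
      have h2 : t < ((j : ℝ) + 1) / 2 ^ N := by
        have := htm.2
        simp only [ha] at this
        push_cast at this
        exact this
      exact walsh_piece hm h1 h2
    rw [intervalIntegral.integral_of_le hle, MeasureTheory.integral_Ioc_eq_integral_Ioo,
      MeasureTheory.setIntegral_congr_fun measurableSet_Ioo hconst,
      MeasureTheory.setIntegral_const, Real.volume_real_Ioo_of_le hle]
    have hlen : a (j + 1) - a j = 1 / 2 ^ N := by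
      simp only [ha]
      push_cast
      field_simp
      ring
    rw [hlen, smul_eq_mul, mul_comm]
  have hint : ∀ k < 2 ^ N, IntervalIntegrable (walsh m) volume (a k) (a (k + 1)) :=
    fun k _ => walsh_intervalIntegrable m _ _
  have hsum := intervalIntegral.sum_integral_adjacent_intervals hint
  have ha0 : a 0 = 0 := by simp [ha]
  have haN : a (2 ^ N) = 1 := by
    simp only [ha]
    push_cast
    field_simp
  rw [ha0, haN] at hsum
  rw [← hsum, Finset.sum_congr rfl (fun j _ => hpiece j), ← Finset.sum_mul,
    key_sum N m.testBit]
  by_cases hm0 : m = 0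
  · subst hm0
    simp [hNdef]
  · rw [if_neg hm0]
    obtain ⟨i, hbit⟩ : ∃ i, m.testBit i = true := by
      by_contra h
      push_neg at h
      exact hm0 (Nat.eq_of_testBit_eq fun i => by
        simp [Bool.eq_false_iff.2 (h i), Nat.zero_testBit])
    have hiN : i < N := by
      by_contra hc
      push_neg at hc
      have : m.testBit i = false := Nat.testBit_lt_two_pow
        (lt_of_lt_of_le hm (Nat.pow_le_pow_right (by norm_num) hc))
      rw [this] at hbit
      exact Bool.noConfusion hbit
    rw [Finset.prod_eq_zero (Finset.mem_range.2 hiN) (by simp [hbit]), zero_mul]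

lemma conj_exp_eq (b : ℕ) (s : ℝ) :
    (starRingEnd ℂ) (Complex.exp (2 * Real.pi * Complex.I * b * s))
      = Complex.exp (-(2 * Real.pi * Complex.I * b * s)) := by
  rw [← Complex.exp_conj]
  congr 1
  simp only [map_mul, Complex.conj_I, Complex.conj_ofReal, map_ofNat, map_natCast]
  ring

lemma exp_orth (a b : ℕ) :
    (∫ s in (0:ℝ)..1, Complex.exp (2 * Real.pi * Complex.I * a * s) *
      (starRingEnd ℂ) (Complex.exp (2 * Real.pi * Complex.I * b * s)))
      = if a = b then 1 else 0 := by
  by_cases hab : a = b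
  · subst hab
    rw [if_pos rfl]
    have : ∀ s : ℝ, Complex.exp (2 * Real.pi * Complex.I * a * s) *
        (starRingEnd ℂ) (Complex.exp (2 * Real.pi * Complex.I * a * s)) = 1 := by
      intro s
      rw [conj_exp_eq, ← Complex.exp_add]
      simp
    rw [intervalIntegral.integral_congr (fun s _ => this s)]
    simp
  · rw [if_neg hab]
    set c : ℂ := 2 * Real.pi * Complex.I * ((a : ℂ) - b) with hc
    have hcne : c ≠ 0 := by
      rw [hc]
      apply mul_ne_zero
      apply mul_ne_zero
      apply mul_ne_zero
      · norm_num
      · exact_mod_cast Complex.ofReal_ne_zero.mpr Real.pi_ne_zero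
      · exact Complex.I_ne_zero
      · rw [sub_ne_zero]
        exact_mod_cast fun h => hab (Nat.cast_injective h)
    have heq : ∀ s : ℝ, Complex.exp (2 * Real.pi * Complex.I * a * s) *
        (starRingEnd ℂ) (Complex.exp (2 * Real.pi * Complex.I * b * s))
        = Complex.exp (c * s) := by
      intro s
      rw [conj_exp_eq, ← Complex.exp_add]
      congr 1
      rw [hc]
      push_cast
      ring
    rw [intervalIntegral.integral_congr (fun s _ => heq s),
      integral_exp_mul_complex hcne]
    have h1 : c * ((1 : ℝ) : ℂ) = ((((a : ℤ) - (b : ℤ)) : ℤ) : ℂ) * (2 * Real.pi * Complex.I) := by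
      rw [hc]; push_cast; ring
    have h0 : c * (0 : ℝ) = 0 := by rw [hc]; push_cast; ring
    rw [h1, h0, Complex.exp_int_mul_two_pi_mul_I, Complex.exp_zero, sub_self, zero_div]

lemma F_norm_pow (N : ℕ) (σ : ℕ → ℕ) (s t : ℝ) :
    ‖F N σ s t‖ ^ 4
      = ∑ k ∈ Finset.range N, ∑ l ∈ Finset.range N, ∑ u ∈ Finset.range N, ∑ v ∈ Finset.range N,
        (Complex.exp (2 * Real.pi * Complex.I * k * s) *
          (starRingEnd ℂ) (Complex.exp (2 * Real.pi * Complex.I * l * s)) *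
          (Complex.exp (2 * Real.pi * Complex.I * u * s) *
            (starRingEnd ℂ) (Complex.exp (2 * Real.pi * Complex.I * v * s)))).re *
          walsh ((σ k ^^^ σ l) ^^^ (σ u ^^^ σ v)) t := by
  have key : (F N σ s t * (starRingEnd ℂ) (F N σ s t)) *
      (F N σ s t * (starRingEnd ℂ) (F N σ s t))
      = ∑ k ∈ Finset.range N, ∑ l ∈ Finset.range N, ∑ u ∈ Finset.range N, ∑ v ∈ Finset.range N,
        (Complex.exp (2 * Real.pi * Complex.I * k * s) *
          (starRingEnd ℂ) (Complex.exp (2 * Real.pi * Complex.I * l * s)) *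
          (Complex.exp (2 * Real.pi * Complex.I * u * s) *
            (starRingEnd ℂ) (Complex.exp (2 * Real.pi * Complex.I * v * s)))) *
          ((walsh ((σ k ^^^ σ l) ^^^ (σ u ^^^ σ v)) t : ℝ) : ℂ) := by
    have hconjF : (starRingEnd ℂ) (F N σ s t)
        = ∑ l ∈ Finset.range N,
          (starRingEnd ℂ) (Complex.exp (2 * Real.pi * Complex.I * l * s)) * (walsh (σ l) t : ℂ) := by
      rw [F, map_sum]
      refine Finset.sum_congr rfl fun l _ => ?_
      rw [map_mul, Complex.conj_ofReal]
    rw [hconjF, F]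
    simp only [Finset.sum_mul_sum]
    refine Finset.sum_congr rfl fun k _ => ?_
    rw [Finset.sum_comm]
    refine Finset.sum_congr rfl fun l _ => Finset.sum_congr rfl fun u _ =>
      Finset.sum_congr rfl fun v _ => ?_
    have hw : ((walsh ((σ k ^^^ σ l) ^^^ (σ u ^^^ σ v)) t : ℝ) : ℂ)
        = (((walsh (σ k) t * walsh (σ l) t) * (walsh (σ u) t * walsh (σ v) t) : ℝ) : ℂ) := by
      rw [walsh_mul, walsh_mul, walsh_mul]
    rw [hw]
    push_cast
    ring
  have h2 : ‖F N σ s t‖ ^ 4 = ((F N σ s t * (starRingEnd ℂ) (F N σ s t)) *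
      (F N σ s t * (starRingEnd ℂ) (F N σ s t))).re := by
    rw [Complex.mul_conj, ← Complex.ofReal_mul, Complex.ofReal_re, Complex.normSq_eq_norm_sq]
    ring
  rw [h2, key]
  simp only [Complex.re_sum]
  refine Finset.sum_congr rfl fun k _ => Finset.sum_congr rfl fun l _ =>
    Finset.sum_congr rfl fun u _ => Finset.sum_congr rfl fun v _ => ?_
  simp [Complex.mul_re]

lemma intervalIntegrable_sum {ι : Type*} (s : Finset ι) (f : ι → ℝ → ℝ)
    (h : ∀ i ∈ s, IntervalIntegrable (f i) volume (0:ℝ) 1) :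
    IntervalIntegrable (fun t => ∑ i ∈ s, f i t) volume (0:ℝ) 1 := by
  have h2 := IntervalIntegrable.sum s h
  have h3 : (∑ i ∈ s, f i) = fun t => ∑ i ∈ s, f i t := by
    ext t; simp
  rwa [h3] at h2

lemma inner_integral (N : ℕ) (σ : ℕ → ℕ) (s : ℝ) :
    (∫ t in (0:ℝ)..1, ‖F N σ s t‖ ^ 4)
      = ∑ k ∈ Finset.range N, ∑ l ∈ Finset.range N, ∑ u ∈ Finset.range N, ∑ v ∈ Finset.range N,
        (Complex.exp (2 * Real.pi * Complex.I * k * s) *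
          (starRingEnd ℂ) (Complex.exp (2 * Real.pi * Complex.I * l * s)) *
          (Complex.exp (2 * Real.pi * Complex.I * u * s) *
            (starRingEnd ℂ) (Complex.exp (2 * Real.pi * Complex.I * v * s)))).re *
          (if (σ k ^^^ σ l) ^^^ (σ u ^^^ σ v) = 0 then (1:ℝ) else 0) := by
  have hterm : ∀ (c : ℝ) (m : ℕ), IntervalIntegrable (fun t => c * walsh m t) volume (0:ℝ) 1 :=
    fun c m => (walsh_intervalIntegrable m 0 1).const_mul c
  rw [intervalIntegral.integral_congr (g :=
    fun t => ∑ k ∈ Finset.range N, ∑ l ∈ Finset.range N, ∑ u ∈ Finset.range N, ∑ v ∈ Finset.range N,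
        (Complex.exp (2 * Real.pi * Complex.I * k * s) *
          (starRingEnd ℂ) (Complex.exp (2 * Real.pi * Complex.I * l * s)) *
          (Complex.exp (2 * Real.pi * Complex.I * u * s) *
            (starRingEnd ℂ) (Complex.exp (2 * Real.pi * Complex.I * v * s)))).re *
          walsh ((σ k ^^^ σ l) ^^^ (σ u ^^^ σ v)) t)
    (fun t _ => F_norm_pow N σ s t)]
  rw [intervalIntegral.integral_finset_sum (fun k _ =>
    intervalIntegrable_sum _ _ (fun l _ => intervalIntegrable_sum _ _ (fun u _ =>
      intervalIntegrable_sum _ _ (fun v _ => hterm _ _))))]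
  refine Finset.sum_congr rfl fun k _ => ?_
  rw [intervalIntegral.integral_finset_sum (fun l _ =>
    intervalIntegrable_sum _ _ (fun u _ => intervalIntegrable_sum _ _ (fun v _ => hterm _ _)))]
  refine Finset.sum_congr rfl fun l _ => ?_
  rw [intervalIntegral.integral_finset_sum (fun u _ =>
    intervalIntegrable_sum _ _ (fun v _ => hterm _ _))]
  refine Finset.sum_congr rfl fun u _ => ?_
  rw [intervalIntegral.integral_finset_sum (fun v _ => hterm _ _)]
  refine Finset.sum_congr rfl fun v _ => ?_
  rw [intervalIntegral.integral_const_mul, walsh_integral]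

lemma coef_comb (k l u v : ℕ) (s : ℝ) :
    Complex.exp (2 * Real.pi * Complex.I * k * s) *
      (starRingEnd ℂ) (Complex.exp (2 * Real.pi * Complex.I * l * s)) *
      (Complex.exp (2 * Real.pi * Complex.I * u * s) *
        (starRingEnd ℂ) (Complex.exp (2 * Real.pi * Complex.I * v * s)))
      = Complex.exp (2 * Real.pi * Complex.I * (↑(k + u) : ℂ) * s) *
        (starRingEnd ℂ) (Complex.exp (2 * Real.pi * Complex.I * (↑(l + v) : ℂ) * s)) := by
  rw [conj_exp_eq l, conj_exp_eq v, conj_exp_eq (l + v), ← Complex.exp_add, ← Complex.exp_add,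
    ← Complex.exp_add, ← Complex.exp_add]
  congr 1
  push_cast
  ring

lemma outer_integral (N : ℕ) (σ : ℕ → ℕ) :
    (∫ s in (0:ℝ)..1,
      ∑ k ∈ Finset.range N, ∑ l ∈ Finset.range N, ∑ u ∈ Finset.range N, ∑ v ∈ Finset.range N,
        (Complex.exp (2 * Real.pi * Complex.I * k * s) *
          (starRingEnd ℂ) (Complex.exp (2 * Real.pi * Complex.I * l * s)) *
          (Complex.exp (2 * Real.pi * Complex.I * u * s) *
            (starRingEnd ℂ) (Complex.exp (2 * Real.pi * Complex.I * v * s)))).re *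
          (if (σ k ^^^ σ l) ^^^ (σ u ^^^ σ v) = 0 then (1:ℝ) else 0))
      = ∑ k ∈ Finset.range N, ∑ l ∈ Finset.range N, ∑ u ∈ Finset.range N, ∑ v ∈ Finset.range N,
          (if k + u = l + v then (1:ℝ) else 0) *
          (if (σ k ^^^ σ l) ^^^ (σ u ^^^ σ v) = 0 then (1:ℝ) else 0) := by
  have hcontC : ∀ k l u v : ℕ, Continuous (fun s : ℝ =>
      Complex.exp (2 * Real.pi * Complex.I * k * s) *
        (starRingEnd ℂ) (Complex.exp (2 * Real.pi * Complex.I * l * s)) *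
        (Complex.exp (2 * Real.pi * Complex.I * u * s) *
          (starRingEnd ℂ) (Complex.exp (2 * Real.pi * Complex.I * v * s)))) := by
    have hexp : ∀ m : ℕ, Continuous (fun s : ℝ =>
        Complex.exp (2 * Real.pi * Complex.I * m * s)) := fun m => by fun_prop
    intro k l u v
    exact ((hexp k).mul (continuous_star.comp (hexp l))).mul
      ((hexp u).mul (continuous_star.comp (hexp v)))
  have hcont : ∀ k l u v : ℕ, Continuous (fun s : ℝ =>
      (Complex.exp (2 * Real.pi * Complex.I * k * s) *
        (starRingEnd ℂ) (Complex.exp (2 * Real.pi * Complex.I * l * s)) *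
        (Complex.exp (2 * Real.pi * Complex.I * u * s) *
          (starRingEnd ℂ) (Complex.exp (2 * Real.pi * Complex.I * v * s)))).re *
        (if (σ k ^^^ σ l) ^^^ (σ u ^^^ σ v) = 0 then (1:ℝ) else 0)) := by
    intro k l u v
    exact (Complex.continuous_re.comp (hcontC k l u v)).mul continuous_const
  rw [intervalIntegral.integral_finset_sum (fun k _ =>
    intervalIntegrable_sum _ _ (fun l _ => intervalIntegrable_sum _ _ (fun u _ =>
      intervalIntegrable_sum _ _ (fun v _ => (hcont k l u v).intervalIntegrable 0 1))))]
  refine Finset.sum_congr rfl fun k _ => ?_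
  rw [intervalIntegral.integral_finset_sum (fun l _ =>
    intervalIntegrable_sum _ _ (fun u _ =>
      intervalIntegrable_sum _ _ (fun v _ => (hcont k l u v).intervalIntegrable 0 1)))]
  refine Finset.sum_congr rfl fun l _ => ?_
  rw [intervalIntegral.integral_finset_sum (fun u _ =>
    intervalIntegrable_sum _ _ (fun v _ => (hcont k l u v).intervalIntegrable 0 1))]
  refine Finset.sum_congr rfl fun u _ => ?_
  rw [intervalIntegral.integral_finset_sum (fun v _ => (hcont k l u v).intervalIntegrable 0 1)]
  refine Finset.sum_congr rfl fun v _ => ?_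
  rw [intervalIntegral.integral_mul_const]
  congr 1
  have h1 : (∫ s in (0:ℝ)..1,
      (Complex.exp (2 * Real.pi * Complex.I * k * s) *
        (starRingEnd ℂ) (Complex.exp (2 * Real.pi * Complex.I * l * s)) *
        (Complex.exp (2 * Real.pi * Complex.I * u * s) *
          (starRingEnd ℂ) (Complex.exp (2 * Real.pi * Complex.I * v * s)))).re)
      = (∫ s in (0:ℝ)..1,
        Complex.exp (2 * Real.pi * Complex.I * k * s) *
          (starRingEnd ℂ) (Complex.exp (2 * Real.pi * Complex.I * l * s)) *
          (Complex.exp (2 * Real.pi * Complex.I * u * s) *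
            (starRingEnd ℂ) (Complex.exp (2 * Real.pi * Complex.I * v * s)))).re := by
    have h2 := Complex.reCLM.intervalIntegral_comp_comm
      ((hcontC k l u v).intervalIntegrable (μ := volume) 0 1)
    simpa using h2
  rw [h1, intervalIntegral.integral_congr (fun s _ => coef_comb k l u v s), exp_orth]
  by_cases h : k + u = l + v <;> simp [h]

lemma xor_helper {a b c d : ℕ} : (a ^^^ b) ^^^ (c ^^^ d) = 0 ↔ (a ^^^ c) ^^^ b = d := by
  rw [xor_eq_zero_iff]
  constructor
  · intro h
    calc (a ^^^ c) ^^^ b = (a ^^^ b) ^^^ c := by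
          rw [Nat.xor_assoc, Nat.xor_comm c b, ← Nat.xor_assoc]
      _ = (c ^^^ d) ^^^ c := by rw [h]
      _ = d := by rw [Nat.xor_comm c d, Nat.xor_assoc, Nat.xor_self, Nat.xor_zero]
  · intro h
    have h2 : c ^^^ ((a ^^^ c) ^^^ b) = a ^^^ b := by
      rw [← Nat.xor_assoc, Nat.xor_comm a c, ← Nat.xor_assoc, Nat.xor_self, Nat.zero_xor]
    rw [← h]
    exact h2.symm

theorem stmt_15 (σ : ℕ → ℕ) (hσ : Function.Bijective σ) (n : ℕ) :
    (∫ s in (0:ℝ)..1, ∫ t in (0:ℝ)..1, ‖F (2 ^ n) σ s t‖ ^ 4)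
      = ((A n σ).card : ℝ) := by
  rw [intervalIntegral.integral_congr (g := fun s =>
    ∑ k ∈ Finset.range (2 ^ n), ∑ l ∈ Finset.range (2 ^ n),
      ∑ u ∈ Finset.range (2 ^ n), ∑ v ∈ Finset.range (2 ^ n),
      (Complex.exp (2 * Real.pi * Complex.I * k * s) *
        (starRingEnd ℂ) (Complex.exp (2 * Real.pi * Complex.I * l * s)) *
        (Complex.exp (2 * Real.pi * Complex.I * u * s) *
          (starRingEnd ℂ) (Complex.exp (2 * Real.pi * Complex.I * v * s)))).re *
        (if (σ k ^^^ σ l) ^^^ (σ u ^^^ σ v) = 0 then (1:ℝ) else 0))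
    (fun s _ => inner_integral (2 ^ n) σ s)]
  rw [outer_integral (2 ^ n) σ]
  have step1 : (∑ q ∈ Finset.range (2 ^ n) ×ˢ Finset.range (2 ^ n) ×ˢ
        Finset.range (2 ^ n) ×ˢ Finset.range (2 ^ n),
        (if q.1 + q.2.2.1 = q.2.1 + q.2.2.2 ∧
            (σ q.1 ^^^ σ q.2.1) ^^^ (σ q.2.2.1 ^^^ σ q.2.2.2) = 0
          then (1:ℝ) else 0))
      = ∑ k ∈ Finset.range (2 ^ n), ∑ l ∈ Finset.range (2 ^ n),
        ∑ u ∈ Finset.range (2 ^ n), ∑ v ∈ Finset.range (2 ^ n),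
          (if k + u = l + v then (1:ℝ) else 0) *
          (if (σ k ^^^ σ l) ^^^ (σ u ^^^ σ v) = 0 then (1:ℝ) else 0) := by
    simp only [Finset.sum_product]
    refine Finset.sum_congr rfl fun k _ => Finset.sum_congr rfl fun l _ =>
      Finset.sum_congr rfl fun u _ => Finset.sum_congr rfl fun v _ => ?_
    by_cases h1 : k + u = l + v <;>
      by_cases h2 : (σ k ^^^ σ l) ^^^ (σ u ^^^ σ v) = 0 <;> simp [h1, h2]
  rw [← step1, Finset.sum_boole]
  congr 1
  refine Finset.card_nbij' (fun q => (q.1, q.2.2.1, q.2.1))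
    (fun p => (p.1, p.2.2, p.2.1, p.1 + p.2.1 - p.2.2)) ?_ ?_ ?_ ?_
  · rintro ⟨k, l, u, v⟩ hq
    simp only [Finset.mem_coe, Finset.mem_filter, Finset.mem_product, Finset.mem_range] at hq
    obtain ⟨⟨hk, hl, hu, hv⟩, hsum, hxor⟩ := hq
    simp only [Finset.mem_coe, A, Finset.mem_filter, Finset.mem_product, Finset.mem_range]
    refine ⟨⟨hk, hu, hl⟩, by omega, by omega, ?_⟩
    have h2 := xor_helper.mp hxor
    have hv' : k + u - l = v := by omega
    rw [hv']
    exact h2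
  · rintro ⟨a, b, c⟩ hp
    simp only [Finset.mem_coe, A, Finset.mem_filter, Finset.mem_product, Finset.mem_range] at hp
    obtain ⟨⟨ha, hb, hc⟩, h1, h2, h3⟩ := hp
    simp only [Finset.mem_coe, Finset.mem_filter, Finset.mem_product, Finset.mem_range]
    exact ⟨⟨ha, hc, hb, h2⟩, by omega, xor_helper.mpr h3⟩
  · rintro ⟨k, l, u, v⟩ hq
    simp only [Finset.mem_coe, Finset.mem_filter, Finset.mem_product, Finset.mem_range] at hq
    obtain ⟨⟨hk, hl, hu, hv⟩, hsum, hxor⟩ := hq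
    simp only [Prod.mk.injEq, true_and, and_true, eq_self_iff_true]
    omega
  · rintro ⟨a, b, c⟩ _
    rfl
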